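/- Let n ≥ 2 and define the Poisson kernel of the half space by P(y', s) = Γ(n/2) π^{−n/2} s (|y'|² + s²)^{−n/2} for y' ∈ ℝⁿ⁻¹ and s > 0. There exists a constant C > 0 depending only on n such that for every bounded continuous g : ℝⁿ⁻¹ → ℝ, every s > 0 and every j ∈ {1, …, n−1}, the function u(x') = ∫_{ℝⁿ⁻¹} P(x'−y', s) g(y') dy' has a partial derivative ∂u/∂xⱼ at every point x' ∈ ℝⁿ⁻¹, and |∂u/∂xⱼ(x')| ≤ (C/s) sup_{ℝⁿ⁻¹} |g|. -/

import Mathlib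

/-!
Up to the constant `c = Γ(n/2) π^(-n/2)`, `u(x + r e) = c s ∫ (‖x + r e - y‖² + s²)^(-n/2) g(y) dy`,
and we differentiate under the integral sign. Since `2‖w‖s ≤ ‖w‖² + s²`, the `r`-derivative of
`(‖w‖² + s²)^(-n/2)` is at most `(n/2)/s · (‖w‖² + s²)^(-n/2)`, and for `|r| < s` shifting `w` by
`r e` changes `‖w‖² + s²` by at most a factor `3`; this gives an integrable dominating function.
Scaling `y ↦ s y` in dimension `n - 1` turns `∫ (‖y‖² + s²)^(-n/2) dy` into
`s⁻¹ ∫ (1 + ‖y‖²)^(-n/2) dy`, so `|∂ⱼu(x)| ≤ c (n/2) ∫ (1 + ‖y‖²)^(-n/2) dy · sup |g| / s`.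
-/

open MeasureTheory Set Metric Filter

noncomputable section

abbrev En (n : ℕ) := EuclideanSpace ℝ (Fin n)

/-- the `i`-th standard basis vector of `ℝⁿ`. -/
def eb (n : ℕ) (i : Fin n) : En n := EuclideanSpace.single i 1

/-- the Laplacian `Δf`, computed as the sum of the second derivatives in the
coordinate directions. -/
def vlap {n : ℕ} {F : Type*} [NormedAddCommGroup F] [NormedSpace ℝ F]
    (f : En n → F) (x : En n) : F :=
  ∑ i, fderiv ℝ (fun y => fderiv ℝ f y (eb n i)) x (eb n i)

/-- the divergence `div v = Σⱼ ∂vʲ/∂xⱼ` of a vector field. -/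
def vdiv {n : ℕ} (v : En n → En n) (x : En n) : ℝ :=
  ∑ i, fderiv ℝ v x (eb n i) i

/-- the index of the last coordinate of `ℝⁿ`. -/
def lastIdx (n : ℕ) (hn : 2 ≤ n) : Fin n := ⟨n - 1, by omega⟩

/-- the last coordinate `xₙ` of a point of `ℝⁿ`. -/
def xlast (n : ℕ) (hn : 2 ≤ n) (x : En n) : ℝ := x (lastIdx n hn)

/-- the open upper half space `ℝⁿ₊ = {x : xₙ > 0}`. -/
def openHalf (n : ℕ) (hn : 2 ≤ n) : Set (En n) := {x : En n | 0 < xlast n hn x}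

/-- the closed upper half space `{x : xₙ ≥ 0}`. -/
def closedHalf (n : ℕ) (hn : 2 ≤ n) : Set (En n) := {x : En n | 0 ≤ xlast n hn x}

/-- the Poisson kernel of the half space,
`P(y', s) = Γ(n/2) π^{−n/2} s (|y'|² + s²)^{−n/2}`. -/
def poissonK (n : ℕ) (y : En (n - 1)) (s : ℝ) : ℝ :=
  Real.Gamma ((n : ℝ) / 2) * Real.pi ^ (-(n : ℝ) / 2) * s *
    (‖y‖ ^ 2 + s ^ 2) ^ (-(n : ℝ) / 2)

open Module
open scoped RealInnerProductSpace

section NormedGroup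

variable {E : Type*} [NormedAddCommGroup E]

lemma continuous_rpow_norm_sq_add_sq {s : ℝ} (hs : 0 < s) (a : ℝ) :
    Continuous fun y : E => (‖y‖ ^ 2 + s ^ 2) ^ a := by
  refine ((continuous_norm.pow 2).add continuous_const).rpow_const fun y => Or.inl ?_
  exact (add_pos_of_nonneg_of_pos (sq_nonneg _) (pow_pos hs 2)).ne'

lemma rpow_norm_add_sq_add_sq_le {s : ℝ} (hs : 0 < s) {p : ℝ} (hp : 0 ≤ p) (w : E) {v : E}
    (hv : ‖v‖ ≤ s) :
    (‖w + v‖ ^ 2 + s ^ 2) ^ (-p) ≤ 3 ^ p * (‖w‖ ^ 2 + s ^ 2) ^ (-p) := by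
  have htri : ‖w‖ ≤ ‖w + v‖ + s := by
    calc ‖w‖ = ‖w + v - v‖ := by rw [add_sub_cancel_right]
      _ ≤ ‖w + v‖ + ‖v‖ := norm_sub_le _ _
      _ ≤ ‖w + v‖ + s := by gcongr
  have hcompare : (‖w‖ ^ 2 + s ^ 2) / 3 ≤ ‖w + v‖ ^ 2 + s ^ 2 := by
    nlinarith [norm_nonneg w, norm_nonneg (w + v), sq_nonneg (‖w + v‖ - s)]
  calc (‖w + v‖ ^ 2 + s ^ 2) ^ (-p) ≤ ((‖w‖ ^ 2 + s ^ 2) / 3) ^ (-p) :=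
        Real.rpow_le_rpow_of_nonpos (by positivity) hcompare (neg_nonpos.2 hp)
    _ = 3 ^ p * (‖w‖ ^ 2 + s ^ 2) ^ (-p) := by
        rw [Real.div_rpow (by positivity) (by norm_num), Real.rpow_neg (by norm_num : (0 : ℝ) ≤ 3),
          div_inv_eq_mul, mul_comm]

end NormedGroup

section InnerProduct

variable {E : Type*} [NormedAddCommGroup E] [InnerProductSpace ℝ E]

lemma hasDerivAt_rpow_norm_add_smul_sq_add_sq {s : ℝ} (hs : 0 < s) (p : ℝ) (v e : E) (r : ℝ) :
    HasDerivAt (fun r : ℝ => (‖v + r • e‖ ^ 2 + s ^ 2) ^ (-p))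
      (2 * ⟪v + r • e, e⟫ * -p * (‖v + r • e‖ ^ 2 + s ^ 2) ^ (-p - 1)) r := by
  have hline : HasDerivAt (fun r : ℝ => v + r • e) e r := by
    simpa using ((hasDerivAt_id r).smul_const e).const_add v
  exact (hline.norm_sq.add_const (s ^ 2)).rpow_const (Or.inl (by positivity))

lemma abs_two_inner_mul_rpow_le {s : ℝ} (hs : 0 < s) {p : ℝ} (hp : 0 ≤ p) (w : E) {e : E}
    (he : ‖e‖ ≤ 1) :
    |2 * ⟪w, e⟫ * -p * (‖w‖ ^ 2 + s ^ 2) ^ (-p - 1)| ≤ p / s * (‖w‖ ^ 2 + s ^ 2) ^ (-p) := by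
  set Q := ‖w‖ ^ 2 + s ^ 2
  have hQ : 0 < Q := by positivity
  have hinner : |⟪w, e⟫| ≤ ‖w‖ :=
    (abs_real_inner_le_norm w e).trans (mul_le_of_le_one_right (norm_nonneg w) he)
  have hQs : 2 * ‖w‖ ≤ Q / s := by
    rw [le_div_iff₀ hs]
    nlinarith [sq_nonneg (‖w‖ - s)]
  have hQpow : Q ^ (-p - 1) * Q = Q ^ (-p) := by
    rw [← Real.rpow_add_one hQ.ne', sub_add_cancel]
  rw [abs_mul, abs_mul, abs_mul, abs_neg, abs_two, abs_of_nonneg hp,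
    abs_of_pos (Real.rpow_pos_of_pos hQ _)]
  calc 2 * |⟪w, e⟫| * p * Q ^ (-p - 1) ≤ Q / s * p * Q ^ (-p - 1) := by
        gcongr
        linarith
    _ = p / s * (Q ^ (-p - 1) * Q) := by ring
    _ = p / s * Q ^ (-p) := by rw [hQpow]

lemma norm_two_inner_mul_rpow_mul_le {s : ℝ} (hs : 0 < s) {p : ℝ} (hp : 0 ≤ p) (w : E) {e : E}
    (he : ‖e‖ ≤ 1) {b B : ℝ} (hb : |b| ≤ B) :
    ‖2 * ⟪w, e⟫ * -p * (‖w‖ ^ 2 + s ^ 2) ^ (-p - 1) * b‖ ≤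
      p / s * B * (‖w‖ ^ 2 + s ^ 2) ^ (-p) := by
  rw [norm_mul, Real.norm_eq_abs, Real.norm_eq_abs]
  calc _ ≤ p / s * (‖w‖ ^ 2 + s ^ 2) ^ (-p) * B :=
        mul_le_mul (abs_two_inner_mul_rpow_le hs hp w he) hb (abs_nonneg _) (by positivity)
    _ = _ := by ring

end InnerProduct

section Integrals

variable {E : Type*} [NormedAddCommGroup E] [NormedSpace ℝ E]

lemma rpow_norm_sq_add_sq_eq_mul_rpow_smul {s : ℝ} (hs : 0 < s) (p : ℝ) (y : E) :
    (‖y‖ ^ 2 + s ^ 2) ^ (-p) = (s ^ 2) ^ (-p) * (1 + ‖s⁻¹ • y‖ ^ 2) ^ (-p) := by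
  have hscale : 1 + ‖s⁻¹ • y‖ ^ 2 = (s ^ 2)⁻¹ * (‖y‖ ^ 2 + s ^ 2) := by
    rw [norm_smul, Real.norm_eq_abs, abs_of_pos (inv_pos.2 hs)]
    field_simp
    ring
  rw [hscale, Real.mul_rpow (by positivity) (by positivity), Real.inv_rpow (by positivity),
    ← mul_assoc, Real.rpow_neg (by positivity), mul_inv_cancel₀ (by positivity), one_mul]

variable [FiniteDimensional ℝ E] [MeasurableSpace E] [BorelSpace E] (μ : Measure E)
  [μ.IsAddHaarMeasure]

lemma integrable_rpow_one_add_norm_sq {p : ℝ} (hp : (finrank ℝ E : ℝ) < 2 * p) :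
    Integrable (fun y : E => ((1 : ℝ) + ‖y‖ ^ 2) ^ (-p)) μ := by
  simpa [neg_div] using integrable_rpow_neg_one_add_norm_sq (μ := μ) hp

lemma integrable_rpow_norm_sq_add_sq {s : ℝ} (hs : 0 < s) {p : ℝ}
    (hp : (finrank ℝ E : ℝ) < 2 * p) :
    Integrable (fun y : E => (‖y‖ ^ 2 + s ^ 2) ^ (-p)) μ := by
  have hscaled := (integrable_comp_smul_iff μ (fun y : E => ((1 : ℝ) + ‖y‖ ^ 2) ^ (-p))
    (inv_ne_zero hs.ne')).2 (integrable_rpow_one_add_norm_sq μ hp)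
  refine (hscaled.const_mul ((s ^ 2) ^ (-p))).congr (ae_of_all _ fun y => ?_)
  exact (rpow_norm_sq_add_sq_eq_mul_rpow_smul hs p y).symm

lemma integral_rpow_norm_sq_add_sq {s : ℝ} (hs : 0 < s) (p : ℝ) :
    ∫ y, (‖y‖ ^ 2 + s ^ 2) ^ (-p) ∂μ =
      s ^ ((finrank ℝ E : ℝ) - 2 * p) * ∫ y, ((1 : ℝ) + ‖y‖ ^ 2) ^ (-p) ∂μ := by
  simp_rw [rpow_norm_sq_add_sq_eq_mul_rpow_smul hs]
  rw [integral_const_mul, Measure.integral_comp_inv_smul_of_nonneg μ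
    (fun y : E => ((1 : ℝ) + ‖y‖ ^ 2) ^ (-p)) hs.le, smul_eq_mul, ← mul_assoc,
    ← Real.rpow_natCast, ← Real.rpow_natCast s (finrank ℝ E), ← Real.rpow_mul hs.le,
    ← Real.rpow_add hs]
  congr 2
  push_cast
  ring

lemma integral_rpow_one_add_norm_sq_pos {p : ℝ} (hp : (finrank ℝ E : ℝ) < 2 * p) :
    0 < ∫ y, ((1 : ℝ) + ‖y‖ ^ 2) ^ (-p) ∂μ := by
  rw [integral_pos_iff_support_of_nonneg (fun y => by positivity)
    (integrable_rpow_one_add_norm_sq μ hp),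
    Function.support_eq_univ fun y => (Real.rpow_pos_of_pos (by positivity) _).ne']
  exact Measure.measure_univ_pos.2 (NeZero.ne μ)

end Integrals

section PoissonIntegral

variable {E : Type*} [NormedAddCommGroup E] [InnerProductSpace ℝ E] [FiniteDimensional ℝ E]
  [MeasurableSpace E] [BorelSpace E] (μ : Measure E) [μ.IsAddHaarMeasure]
  {g : E → ℝ} {B s p : ℝ}

theorem hasDerivAt_integral_rpow_norm_sq_add_sq_mul (hg : AEStronglyMeasurable g μ)
    (hgB : ∀ y, |g y| ≤ B) (hs : 0 < s) (hp : (finrank ℝ E : ℝ) < 2 * p) (x : E) {e : E}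
    (he : ‖e‖ ≤ 1) :
    HasDerivAt (fun r : ℝ => ∫ y, (‖x + r • e - y‖ ^ 2 + s ^ 2) ^ (-p) * g y ∂μ)
      (∫ y, 2 * ⟪x - y, e⟫ * -p * (‖x - y‖ ^ 2 + s ^ 2) ^ (-p - 1) * g y ∂μ) 0 := by
  have hp0 : 0 ≤ p := by linarith [(finrank ℝ E).cast_nonneg (α := ℝ)]
  have hkernel := integrable_rpow_norm_sq_add_sq μ hs hp
  have hcont : ∀ a r : ℝ, Continuous fun y : E => (‖x - y + r • e‖ ^ 2 + s ^ 2) ^ a :=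
    fun a r => (continuous_rpow_norm_sq_add_sq hs a).comp
      (by fun_prop : Continuous fun y : E => x - y + r • e)
  have hshift : ∀ (r : ℝ) (y : E), x + r • e - y = x - y + r • e := fun r y => by abel
  simp_rw [hshift]
  have hbound : ∀ y, ∀ r ∈ ball (0 : ℝ) s,
      ‖2 * ⟪x - y + r • e, e⟫ * -p * (‖x - y + r • e‖ ^ 2 + s ^ 2) ^ (-p - 1) * g y‖ ≤
        p / s * 3 ^ p * B * (‖x - y‖ ^ 2 + s ^ 2) ^ (-p) := by
    intro y r hr
    have hre : ‖r • e‖ ≤ s := by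
      rw [norm_smul]
      exact (mul_le_mul (mem_ball_zero_iff.1 hr).le he (norm_nonneg _) hs.le).trans_eq (mul_one s)
    have hB : 0 ≤ B := (abs_nonneg _).trans (hgB y)
    calc _ ≤ p / s * B * (‖x - y + r • e‖ ^ 2 + s ^ 2) ^ (-p) :=
          norm_two_inner_mul_rpow_mul_le hs hp0 _ he (hgB y)
      _ ≤ p / s * B * (3 ^ p * (‖x - y‖ ^ 2 + s ^ 2) ^ (-p)) := by
          gcongr
          exact rpow_norm_add_sq_add_sq_le hs hp0 _ hre
      _ = _ := by ring
  have hintegrable : Integrable (fun y => (‖x - y + (0 : ℝ) • e‖ ^ 2 + s ^ 2) ^ (-p) * g y) μ := by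
    simpa using (hkernel.comp_sub_left x).mul_bdd hg (ae_of_all _ fun y => (hgB y : ‖g y‖ ≤ B))
  obtain ⟨-, hderiv⟩ := hasDerivAt_integral_of_dominated_loc_of_deriv_le (μ := μ)
    (ball_mem_nhds (0 : ℝ) hs)
    (Eventually.of_forall fun r => ((hcont _ r).aestronglyMeasurable.mul hg))
    hintegrable
    (((by fun_prop : Continuous fun y => 2 * ⟪x - y + (0 : ℝ) • e, e⟫ * -p).mul
      (hcont _ 0)).aestronglyMeasurable.mul hg)
    (ae_of_all _ hbound) ((hkernel.comp_sub_left x).const_mul _)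
    (ae_of_all _ fun y r _ =>
      (hasDerivAt_rpow_norm_add_smul_sq_add_sq hs p (x - y) e r).mul_const (g y))
  simpa using hderiv

theorem abs_integral_two_inner_mul_rpow_mul_le (hgB : ∀ y, |g y| ≤ B) (hs : 0 < s)
    (hp : (finrank ℝ E : ℝ) < 2 * p) (x : E) {e : E} (he : ‖e‖ ≤ 1) :
    |∫ y, 2 * ⟪x - y, e⟫ * -p * (‖x - y‖ ^ 2 + s ^ 2) ^ (-p - 1) * g y ∂μ| ≤
      p / s * B * ∫ y, (‖y‖ ^ 2 + s ^ 2) ^ (-p) ∂μ := by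
  have hp0 : 0 ≤ p := by linarith [(finrank ℝ E).cast_nonneg (α := ℝ)]
  rw [← Real.norm_eq_abs, ← integral_sub_left_eq_self (fun y => (‖y‖ ^ 2 + s ^ 2) ^ (-p)) μ x,
    ← integral_const_mul]
  exact norm_integral_le_of_norm_le
    (((integrable_rpow_norm_sq_add_sq μ hs hp).comp_sub_left x).const_mul _)
    (ae_of_all _ fun y => norm_two_inner_mul_rpow_mul_le hs hp0 _ he (hgB y))

end PoissonIntegral

/-- **Estimate (2.9)**: tangential-derivative `L^∞` estimate of the Poisson semigroup. -/
theorem poisson_tangential_derivative_sup_estimate (n : ℕ) (hn : 2 ≤ n) :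
    ∃ C > (0 : ℝ), ∀ g : En (n - 1) → ℝ, Continuous g →
      ∀ B : ℝ, (∀ y : En (n - 1), |g y| ≤ B) →
      ∀ s : ℝ, 0 < s → ∀ j : Fin (n - 1), ∀ x : En (n - 1),
        ∃ d : ℝ,
          HasDerivAt (fun r : ℝ =>
            ∫ y : En (n - 1), poissonK n (x + r • eb (n - 1) j - y) s * g y) d 0 ∧
          |d| ≤ C / s * B := by
  set p : ℝ := n / 2
  have hexp : (finrank ℝ (En (n - 1)) : ℝ) - 2 * p = -1 := by
    rw [finrank_euclideanSpace_fin, Nat.cast_sub (by omega)]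
    ring
  have hdim : (finrank ℝ (En (n - 1)) : ℝ) < 2 * p := by linarith
  set c : ℝ := Real.Gamma p * Real.pi ^ (-p)
  have hc : 0 < c := mul_pos (Real.Gamma_pos_of_pos (by positivity)) (by positivity)
  set I : ℝ := ∫ y : En (n - 1), (1 + ‖y‖ ^ 2) ^ (-p) with hI_def
  have hI : 0 < I := integral_rpow_one_add_norm_sq_pos volume hdim
  refine ⟨c * p * I, by positivity, fun g hg B hB s hs j x => ?_⟩
  have he : ‖eb (n - 1) j‖ ≤ 1 := by simp [eb]
  have hpoisson : ∀ r : ℝ, ∫ y, poissonK n (x + r • eb (n - 1) j - y) s * g y =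
      c * s * ∫ y, (‖x + r • eb (n - 1) j - y‖ ^ 2 + s ^ 2) ^ (-p) * g y := fun r => by
    rw [← integral_const_mul]
    simp only [poissonK, neg_div, mul_assoc, c, p]
  simp_rw [hpoisson]
  refine ⟨_, (hasDerivAt_integral_rpow_norm_sq_add_sq_mul volume hg.aestronglyMeasurable hB hs
    hdim x he).const_mul (c * s), ?_⟩
  rw [abs_mul, abs_of_pos (by positivity)]
  calc _ ≤ c * s * (p / s * B * ∫ y : En (n - 1), (‖y‖ ^ 2 + s ^ 2) ^ (-p)) := by
        gcongr
        exact abs_integral_two_inner_mul_rpow_mul_le volume hB hs hdim x he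
    _ = c * p * I / s * B := by
        rw [integral_rpow_norm_sq_add_sq volume hs, hexp, Real.rpow_neg_one, ← hI_def]
        field_simp
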